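/- The dodecahedron graph (20 vertices, 30 edges, 3-regular) has a proper edge coloring with 6 colors in which each color class is a 5-edge matching invariant under a 5-fold rotation, and the rotation group A5 permutes the 6 color classes transitively. -/

import Mathlib

/-- The dodecahedron graph, presented as the generalized Petersen graph GP(10,2)
(20 vertices, 30 edges, 3-regular). -/
def dodecahedronGraph : SimpleGraph (Fin 10 ⊕ Fin 10) :=
  SimpleGraph.fromRel (fun a b =>
    match a, b with
    | .inl i, .inl j => j = i + 1
    | .inl i, .inr j => j = i
    | .inr i, .inr j => j = i + 2
    | _, _ => False)

/-!
Label the vertices by the twenty ordered pairs `(a, b)` of distinct points of `{0, …, 4}`, so that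
`S₅` acts faithfully on them; then `(a, b) ~ (c, d)` exactly when `(a, b, c, d, e)` is an even
arrangement of the five points, and `A₅` acts by rotations. The perfect matching `baseMatching`
is fixed by the 5-cycle `i ↦ i + 1`, and six of its images under `A₅` partition the edges.

That `A₅` permutes these six classes is checked on a 5-cycle and a 3-cycle only: the permutations
of the vertices that permute the classes form a subgroup, and a subgroup of `A₅` of order
divisible by 15 has index `n ≤ 4`; acting on its cosets gives a map `A₅ → Sₙ` whose kernel is
nontrivial as `60 ∤ n!`, hence everything by simplicity. As the classes cover the edges, `A₅`
then also preserves adjacency.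
-/

open Equiv Finset Pointwise

theorem Subgroup.eq_top_of_not_card_dvd_factorial_index {G : Type*} [Group G] [Finite G]
    [IsSimpleGroup G] {H : Subgroup G} (h : ¬ Nat.card G ∣ H.index.factorial) : H = ⊤ := by
  have hcore : H.normalCore.index ∣ H.index.factorial := by
    rw [normalCore_eq_ker, index_ker, index_eq_card, ← Nat.card_perm]
    exact card_subgroup_dvd_card _
  rcases H.normalCore_normal.eq_bot_or_eq_top with hbot | htop
  · rw [hbot, index_bot] at hcore
    exact absurd hcore h
  · exact eq_top_iff.mpr (htop ▸ H.normalCore_le)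

theorem alternatingGroup.eq_top_of_three_dvd_of_five_dvd
    {H : Subgroup (alternatingGroup (Fin 5))} (h3 : 3 ∣ Nat.card H) (h5 : 5 ∣ Nat.card H) :
    H = ⊤ := by
  have hcard : Nat.card (alternatingGroup (Fin 5)) = 60 := by
    rw [nat_card_alternatingGroup, Nat.card_fin]
    rfl
  obtain ⟨k, hk⟩ := Nat.Coprime.mul_dvd_of_dvd_of_dvd (by norm_num) h3 h5
  have hindex : H.index ∣ 4 := by
    have := H.card_mul_index
    rw [hcard, hk, mul_assoc] at this
    exact Dvd.intro_left k (by omega)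
  refine H.eq_top_of_not_card_dvd_factorial_index ?_
  rw [hcard]
  have := Nat.le_of_dvd (by norm_num) hindex
  interval_cases H.index <;> decide

theorem alternatingGroup.le_of_mem_of_orderOf {K : Subgroup (Perm (Fin 5))} {x y : Perm (Fin 5)}
    (hxK : x ∈ K) (hyK : y ∈ K) (hxA : x ∈ alternatingGroup (Fin 5))
    (hyA : y ∈ alternatingGroup (Fin 5)) (hx : orderOf x = 3) (hy : orderOf y = 5) :
    alternatingGroup (Fin 5) ≤ K := by
  rw [← Subgroup.subgroupOf_eq_top]
  refine eq_top_of_three_dvd_of_five_dvd ?_ ?_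
  · simpa [hx] using (K.subgroupOf _).orderOf_dvd_natCard (x := ⟨x, hxA⟩) hxK
  · simpa [hy] using (K.subgroupOf _).orderOf_dvd_natCard (x := ⟨y, hyA⟩) hyK

namespace Sym2

variable {G α : Type*}

instance [SMul G α] : SMul G (Sym2 α) := ⟨fun g ↦ map (g • ·)⟩

instance [Monoid G] [MulAction G α] : MulAction G (Sym2 α) where
  one_smul z := by
    change map _ z = z
    simp
  mul_smul g h z := by
    change map _ z = map _ (map _ z)
    simp [map_map, mul_smul]

theorem pairwise_smul_set [Group G] [MulAction G α] {S : Set (Sym2 α)}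
    (hS : S.Pairwise fun e f ↦ ∀ v, ¬(v ∈ e ∧ v ∈ f)) (g : G) :
    (g • S).Pairwise fun e f ↦ ∀ v, ¬(v ∈ e ∧ v ∈ f) := by
  refine Set.Pairwise.image (hS.mono' fun e f h v ⟨hve, hvf⟩ ↦ ?_)
  obtain ⟨a, ha, rfl⟩ := mem_map.mp hve
  obtain ⟨b, hb, hba⟩ := mem_map.mp hvf
  exact h a ⟨ha, smul_left_cancel g hba ▸ hb⟩

end Sym2

theorem Equiv.Perm.image_sym2Map_coe_finset {α : Type*} [DecidableEq α] (g : Perm α)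
    (S : Finset (Sym2 α)) : Sym2.map g '' S = ↑(g • S) := by
  rw [coe_smul_finset]
  rfl

theorem SimpleGraph.adj_apply_of_iUnion_eq_edgeSet {V ι : Type*} {G : SimpleGraph V}
    {M : ι → Set (Sym2 V)} (hM : ⋃ i, M i = G.edgeSet) {g : Perm V}
    (hg : ∀ i, ∃ j, g • M i = M j) {a b : V} (hab : G.Adj a b) : G.Adj (g a) (g b) := by
  rw [← mem_edgeSet, ← hM, Set.mem_iUnion] at hab ⊢
  obtain ⟨i, hi⟩ := hab
  obtain ⟨j, hj⟩ := hg i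
  exact ⟨j, hj ▸ Set.smul_mem_smul_set hi⟩

theorem MulAction.exists_smul_eq_of_mem_stabilizer_image {G α ι : Type*} [Group G]
    [MulAction G α] [DecidableEq α] [Fintype ι] {M : ι → Finset α} {g : G}
    (hg : g ∈ stabilizer G (univ.image M)) (i : ι) : ∃ j, g • M i = M j := by
  have : g • M i ∈ g • univ.image M := smul_mem_smul_finset (mem_image_of_mem M (mem_univ i))
  rw [mem_stabilizer_iff.mp hg] at this
  simpa [eq_comm] using this

def Equiv.Perm.offDiagHom (α : Type*) : Perm α →* Perm {p : α × α // p.1 ≠ p.2} where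
  toFun σ := Perm.subtypePerm (σ.prodCongr σ) fun _ ↦ σ.injective.ne_iff
  map_one' := rfl
  map_mul' _ _ := rfl

theorem Equiv.Perm.offDiagHom_injective (α : Type*) [Nontrivial α] :
    Function.Injective (offDiagHom α) := by
  intro σ τ h
  ext a
  obtain ⟨b, hb⟩ := exists_ne a
  exact congrArg (fun p ↦ (p.1 : α × α).1) (Perm.ext_iff.mp h ⟨(a, b), hb.symm⟩)

namespace Dodecahedron

local notation "V" => Fin 10 ⊕ Fin 10

instance : DecidableRel dodecahedronGraph.Adj := fun a b ↦ by
  unfold dodecahedronGraph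
  cases a <;> cases b <;> simp only [SimpleGraph.fromRel_adj] <;> infer_instance

def vertexLabel : V → {p : Fin 5 × Fin 5 // p.1 ≠ p.2} :=
  Sum.elim
    ![⟨(0, 1), by decide⟩, ⟨(2, 3), by decide⟩, ⟨(1, 4), by decide⟩, ⟨(0, 2), by decide⟩,
      ⟨(4, 3), by decide⟩, ⟨(1, 0), by decide⟩, ⟨(3, 2), by decide⟩, ⟨(4, 1), by decide⟩,
      ⟨(2, 0), by decide⟩, ⟨(3, 4), by decide⟩]
    ![⟨(4, 2), by decide⟩, ⟨(4, 0), by decide⟩, ⟨(3, 0), by decide⟩, ⟨(3, 1), by decide⟩,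
      ⟨(2, 1), by decide⟩, ⟨(2, 4), by decide⟩, ⟨(0, 4), by decide⟩, ⟨(0, 3), by decide⟩,
      ⟨(1, 3), by decide⟩, ⟨(1, 2), by decide⟩]

theorem bijective_vertexLabel : Function.Bijective vertexLabel := by
  decide

def vertexEquiv : V ≃ {p : Fin 5 × Fin 5 // p.1 ≠ p.2} where
  toFun := vertexLabel
  invFun := Fintype.bijInv bijective_vertexLabel
  left_inv := Fintype.leftInverse_bijInv bijective_vertexLabel
  right_inv := Fintype.rightInverse_bijInv bijective_vertexLabel

def vertexPerm : Perm (Fin 5) →* Perm V :=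
  vertexEquiv.symm.permCongrHom.toMonoidHom.comp (Perm.offDiagHom (Fin 5))

theorem vertexPerm_injective : Function.Injective vertexPerm :=
  vertexEquiv.symm.permCongrHom.injective.comp (Perm.offDiagHom_injective _)

def fiveCycle : Perm (Fin 5) := finRotate 5

def threeCycle : Perm (Fin 5) := swap 0 1 * swap 1 2

theorem fiveCycle_mem_alternatingGroup : fiveCycle ∈ alternatingGroup (Fin 5) :=
  Perm.mem_alternatingGroup.mpr (by decide)

theorem threeCycle_mem_alternatingGroup : threeCycle ∈ alternatingGroup (Fin 5) :=
  Perm.mem_alternatingGroup.mpr (by decide)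

theorem orderOf_fiveCycle : orderOf fiveCycle = 5 :=
  haveI := Fact.mk Nat.prime_five
  orderOf_eq_prime (by decide) (by decide)

theorem orderOf_threeCycle : orderOf threeCycle = 3 :=
  orderOf_eq_prime (by decide) (by decide)

def baseMatching : Finset (Sym2 V) :=
  {s(.inl 3, .inr 3), s(.inr 7, .inr 5), s(.inr 8, .inr 0), s(.inl 2, .inr 2), s(.inl 8, .inl 7)}

theorem vertexPerm_fiveCycle_smul_baseMatching :
    vertexPerm fiveCycle • baseMatching = baseMatching := by
  decide

-- Coset representatives for the stabiliser of `baseMatching` in `A₅`, a dihedral group of order 10.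
def transversal : Fin 6 → Perm (Fin 5) :=
  ![1, threeCycle, fiveCycle * threeCycle, fiveCycle ^ 2 * threeCycle,
    fiveCycle ^ 3 * threeCycle, fiveCycle ^ 4 * threeCycle]

theorem transversal_mem_alternatingGroup (i : Fin 6) : transversal i ∈ alternatingGroup (Fin 5) :=
  Perm.mem_alternatingGroup.mpr (by revert i; decide)

def colorClass (i : Fin 6) : Finset (Sym2 V) := vertexPerm (transversal i) • baseMatching

theorem pairwise_disjoint_colorClass :
    Pairwise fun i j ↦ Disjoint (colorClass i : Set (Sym2 V)) (colorClass j) := by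
  have : ∀ i j, i ≠ j → Disjoint (colorClass i) (colorClass j) := by decide
  exact fun i j h ↦ Finset.disjoint_coe.mpr (this i j h)

theorem iUnion_colorClass : ⋃ i, (colorClass i : Set (Sym2 V)) = dodecahedronGraph.edgeSet := by
  have : univ.biUnion colorClass = dodecahedronGraph.edgeFinset := by decide
  rw [← SimpleGraph.coe_edgeFinset, ← this, coe_biUnion]
  simp

theorem ncard_colorClass (i : Fin 6) : (colorClass i : Set (Sym2 V)).ncard = 5 := by
  rw [Set.ncard_coe_finset, colorClass, card_smul_finset]
  rfl

theorem pairwise_colorClass (i : Fin 6) :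
    (colorClass i : Set (Sym2 V)).Pairwise fun e f ↦ ∀ v, ¬(v ∈ e ∧ v ∈ f) := by
  have : (baseMatching : Set (Sym2 V)).Pairwise fun e f ↦ ∀ v, ¬(v ∈ e ∧ v ∈ f) := by
    simp only [Set.Pairwise, mem_coe]
    set_option maxRecDepth 2000 in decide
  rw [colorClass, coe_smul_finset]
  exact Sym2.pairwise_smul_set this _

theorem vertexPerm_transversal_smul_colorClass (i j : Fin 6) :
    vertexPerm (transversal j * (transversal i)⁻¹) • colorClass i = colorClass j := by
  rw [colorClass, colorClass, map_mul, map_inv, mul_smul, inv_smul_smul]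

def rotationGroup : Subgroup (Perm V) := (alternatingGroup (Fin 5)).map vertexPerm

theorem nat_card_rotationGroup : Nat.card rotationGroup = 60 := by
  rw [rotationGroup,
    ← Nat.card_congr (Subgroup.equivMapOfInjective _ vertexPerm vertexPerm_injective).toEquiv,
    nat_card_alternatingGroup, Nat.card_fin]
  rfl

theorem rotationGroup_le_stabilizer :
    rotationGroup ≤ MulAction.stabilizer (Perm V) (univ.image colorClass) := by
  rw [rotationGroup, Subgroup.map_le_iff_le_comap]
  refine alternatingGroup.le_of_mem_of_orderOf ?_ ?_ threeCycle_mem_alternatingGroup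
    fiveCycle_mem_alternatingGroup orderOf_threeCycle orderOf_fiveCycle
  all_goals rw [Subgroup.mem_comap, MulAction.mem_stabilizer_iff]; decide

theorem exists_smul_colorClass_eq {g : Perm V} (hg : g ∈ rotationGroup) (i : Fin 6) :
    ∃ j, g • colorClass i = colorClass j :=
  MulAction.exists_smul_eq_of_mem_stabilizer_image (rotationGroup_le_stabilizer hg) i

theorem adj_apply_iff {g : Perm V} (hg : g ∈ rotationGroup) (a b : V) :
    dodecahedronGraph.Adj (g a) (g b) ↔ dodecahedronGraph.Adj a b := by
  have key {g : Perm V} (hg : g ∈ rotationGroup) {a b : V} :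
      dodecahedronGraph.Adj a b → dodecahedronGraph.Adj (g a) (g b) :=
    SimpleGraph.adj_apply_of_iUnion_eq_edgeSet iUnion_colorClass fun i ↦ by
      obtain ⟨j, hj⟩ := exists_smul_colorClass_eq hg i
      exact ⟨j, by rw [← coe_smul_finset, hj]⟩
  refine ⟨fun h ↦ ?_, key hg⟩
  simpa using key (inv_mem hg) h

theorem exists_rotation_fixing_colorClass (i : Fin 6) :
    ∃ g ∈ rotationGroup, orderOf g = 5 ∧ g • colorClass i = colorClass i := by
  have hw := transversal_mem_alternatingGroup i
  refine ⟨vertexPerm (transversal i * fiveCycle * (transversal i)⁻¹),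
    ⟨_, mul_mem (mul_mem hw fiveCycle_mem_alternatingGroup) (inv_mem hw), rfl⟩, ?_, ?_⟩
  · rw [orderOf_injective vertexPerm vertexPerm_injective, ← MulAut.conj_apply,
      MulEquiv.orderOf_eq, orderOf_fiveCycle]
  · rw [colorClass, map_mul, map_mul, map_inv, mul_smul, mul_smul, inv_smul_smul,
      vertexPerm_fiveCycle_smul_baseMatching]

end Dodecahedron

open Dodecahedron in
/-- The dodecahedron graph has a proper edge coloring with 6 colors (a partition of
its 30 edges into 6 color classes, each a 5-edge matching), where each color class
is invariant under a 5-fold rotation (an adjacency-preserving permutation of order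
5), and the rotation group `A₅` (a group of order 60 of adjacency-preserving
permutations, isomorphic to `A₅`) permutes the 6 color classes transitively. -/
theorem stmt18 :
    ∃ M : Fin 6 → Set (Sym2 (Fin 10 ⊕ Fin 10)),
      (Pairwise fun i j => Disjoint (M i) (M j)) ∧
      (⋃ i, M i) = dodecahedronGraph.edgeSet ∧
      (∀ i, (M i).ncard = 5 ∧
        (∀ e ∈ M i, ∀ f ∈ M i, e ≠ f → ∀ v, ¬(v ∈ e ∧ v ∈ f)) ∧
        ∃ g : Equiv.Perm (Fin 10 ⊕ Fin 10),
          (∀ a b, dodecahedronGraph.Adj (g a) (g b) ↔ dodecahedronGraph.Adj a b) ∧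
          orderOf g = 5 ∧ Sym2.map g '' M i = M i) ∧
      ∃ H : Subgroup (Equiv.Perm (Fin 10 ⊕ Fin 10)),
        Nat.card H = 60 ∧
        Nonempty (H ≃* alternatingGroup (Fin 5)) ∧
        (∀ g ∈ H, ∀ a b,
          dodecahedronGraph.Adj (g a) (g b) ↔ dodecahedronGraph.Adj a b) ∧
        (∀ g ∈ H, ∀ i, ∃ j, Sym2.map g '' M i = M j) ∧
        (∀ i j, ∃ g ∈ H, Sym2.map g '' M i = M j) := by
  refine ⟨fun i ↦ colorClass i, pairwise_disjoint_colorClass, iUnion_colorClass,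
    fun i ↦ ⟨ncard_colorClass i, pairwise_colorClass i, ?_⟩, rotationGroup,
    nat_card_rotationGroup, ⟨(Subgroup.equivMapOfInjective _ _ vertexPerm_injective).symm⟩,
    fun g hg ↦ adj_apply_iff hg, fun g hg i ↦ ?_, fun i j ↦ ?_⟩
  · obtain ⟨g, hg, hord, hfix⟩ := exists_rotation_fixing_colorClass i
    exact ⟨g, adj_apply_iff hg, hord, by rw [Perm.image_sym2Map_coe_finset, hfix]⟩
  · obtain ⟨j, hj⟩ := exists_smul_colorClass_eq hg i
    exact ⟨j, by rw [Perm.image_sym2Map_coe_finset, hj]⟩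
  · refine ⟨_, ⟨_, mul_mem (transversal_mem_alternatingGroup j)
      (inv_mem (transversal_mem_alternatingGroup i)), rfl⟩, ?_⟩
    rw [Perm.image_sym2Map_coe_finset, vertexPerm_transversal_smul_colorClass]
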